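/- arXiv:2406.19715 — 2 statements merged into one kernel-verified Lean document; each statement's English description precedes it below -/
import Mathlib

section
/- For every integer n ≥ 1, the number of type-B (1,2)-data of length n equals 4^n · n!. -/
/-- The height after step `i` of the path encoded by `(β, γ)`:
`h_i = ∑_{j=1}^{i} (1 - β j - γ j)` in `ℤ` (so `h_0 = 0`). -/
def bHeight (β γ : ℕ → ℕ) (i : ℕ) : ℤ :=
  ∑ j ∈ Finset.Icc 1 i, (1 - (β j : ℤ) - (γ j : ℤ))

/-- A type-B (1,2)-datum of length `n`: sequences `α β γ : {1,…,n} → ℕ` (encoded as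
functions `ℕ → ℕ` vanishing outside `{1,…,n}`) with `β i, γ i ∈ {0,1}`, heights
`h_i ≥ 0` for all `i ∈ {1,…,n}`, and `α_i ≤ h_{i-1} + h_i` for all `i ∈ {1,…,n}`. -/
def IsBDatum (n : ℕ) (α β γ : ℕ → ℕ) : Prop :=
  (∀ i, i ∉ Finset.Icc 1 n → α i = 0 ∧ β i = 0 ∧ γ i = 0) ∧
  (∀ i ∈ Finset.Icc 1 n, β i ≤ 1 ∧ γ i ≤ 1) ∧
  (∀ i ∈ Finset.Icc 1 n, 0 ≤ bHeight β γ i) ∧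
  (∀ i ∈ Finset.Icc 1 n, (α i : ℤ) ≤ bHeight β γ (i - 1) + bHeight β γ i)

namespace BAux

abbrev T3 : Type := (ℕ → ℕ) × (ℕ → ℕ) × (ℕ → ℕ)

def D (n : ℕ) (h : ℤ) : Set T3 :=
  {t | IsBDatum n t.1 t.2.1 t.2.2 ∧ bHeight t.2.1 t.2.2 n = h}

lemma bHeight_congr {β γ β' γ' : ℕ → ℕ} {i : ℕ}
    (hβ : ∀ j ∈ Finset.Icc 1 i, β j = β' j) (hγ : ∀ j ∈ Finset.Icc 1 i, γ j = γ' j) :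
    bHeight β γ i = bHeight β' γ' i :=
  Finset.sum_congr rfl fun j hj => by rw [hβ j hj, hγ j hj]

lemma bHeight_succ (β γ : ℕ → ℕ) (n : ℕ) :
    bHeight β γ (n+1) = bHeight β γ n + (1 - (β (n+1) : ℤ) - (γ (n+1) : ℤ)) :=
  Finset.sum_Icc_succ_top (Nat.le_add_left 1 n) _

/-- extend a datum of length `n` by one step -/
def ext (n : ℕ) (t : T3) (a b c : ℕ) : T3 :=
  (Function.update t.1 (n+1) a, Function.update t.2.1 (n+1) b, Function.update t.2.2 (n+1) c)

lemma bHeight_ext_le (n : ℕ) (t : T3) (a b c : ℕ) {i : ℕ} (hi : i ≤ n) :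
    bHeight (ext n t a b c).2.1 (ext n t a b c).2.2 i = bHeight t.2.1 t.2.2 i := by
  refine bHeight_congr (fun j hj => ?_) (fun j hj => ?_) <;>
  · simp only [Finset.mem_Icc] at hj
    exact Function.update_of_ne (by omega) _ _

lemma bHeight_ext_top (n : ℕ) (t : T3) (a b c : ℕ) :
    bHeight (ext n t a b c).2.1 (ext n t a b c).2.2 (n+1)
      = bHeight t.2.1 t.2.2 n + (1 - (b : ℤ) - (c : ℤ)) := by
  rw [bHeight_succ, bHeight_ext_le n t a b c le_rfl]
  simp [ext]

lemma ext_mem_D {n : ℕ} {h' : ℤ} {t : T3} (ht : t ∈ D n h') (a b c : ℕ)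
    (hb : b ≤ 1) (hc : c ≤ 1) (hh : 0 ≤ h' + (1 - (b:ℤ) - c))
    (ha : (a : ℤ) ≤ 2*h' + (1 - (b:ℤ) - c)) :
    ext n t a b c ∈ D (n+1) (h' + (1 - (b:ℤ) - c)) := by
  obtain ⟨⟨h0, h1, h2, h3⟩, hend⟩ := ht
  have hval : ∀ i, i ≠ n+1 → (ext n t a b c).1 i = t.1 i ∧
      (ext n t a b c).2.1 i = t.2.1 i ∧ (ext n t a b c).2.2 i = t.2.2 i := by
    intro i hi
    exact ⟨Function.update_of_ne hi _ _, Function.update_of_ne hi _ _,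
      Function.update_of_ne hi _ _⟩
  refine ⟨⟨?_, ?_, ?_, ?_⟩, ?_⟩
  · intro i hi
    have hi1 : i ≠ n+1 := by
      simp only [Finset.mem_Icc] at hi; omega
    have hi2 : i ∉ Finset.Icc 1 n := by
      simp only [Finset.mem_Icc] at hi ⊢; omega
    obtain ⟨e1, e2, e3⟩ := hval i hi1
    rw [e1, e2, e3]
    exact h0 i hi2
  · intro i hi
    simp only [Finset.mem_Icc] at hi
    rcases eq_or_ne i (n+1) with rfl | hne
    · constructor <;> simp [ext, hb, hc]
    · obtain ⟨_, e2, e3⟩ := hval i hne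
      rw [e2, e3]
      exact h1 i (by simp only [Finset.mem_Icc]; omega)
  · intro i hi
    simp only [Finset.mem_Icc] at hi
    rcases eq_or_ne i (n+1) with rfl | hne
    · rw [bHeight_ext_top, hend]; exact hh
    · rw [bHeight_ext_le n t a b c (by omega)]
      exact h2 i (by simp only [Finset.mem_Icc]; omega)
  · intro i hi
    simp only [Finset.mem_Icc] at hi
    rcases eq_or_ne i (n+1) with rfl | hne
    · rw [bHeight_ext_top, hend]
      have : (n+1) - 1 = n := by omega
      rw [this, bHeight_ext_le n t a b c le_rfl, hend]
      simp only [ext, Function.update_self]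
      linarith
    · rw [(hval i hne).1, bHeight_ext_le n t a b c (by omega : i - 1 ≤ n),
        bHeight_ext_le n t a b c (by omega : i ≤ n)]
      exact h3 i (by simp only [Finset.mem_Icc]; omega)
  · rw [bHeight_ext_top, hend]


lemma mem_D_succ_facts {n : ℕ} {h : ℤ} {t : T3} (ht : t ∈ D (n+1) h) :
    t.2.1 (n+1) ≤ 1 ∧ t.2.2 (n+1) ≤ 1 ∧ 0 ≤ h ∧
    ext n t 0 0 0 ∈ D n (h - (1 - (t.2.1 (n+1) : ℤ) - (t.2.2 (n+1) : ℤ))) ∧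
    (t.1 (n+1) : ℤ) ≤ 2*h - (1 - (t.2.1 (n+1) : ℤ) - (t.2.2 (n+1) : ℤ)) := by
  obtain ⟨⟨h0, h1, h2, h3⟩, hend⟩ := ht
  have hmem : n+1 ∈ Finset.Icc 1 (n+1) := by simp
  have hb := (h1 _ hmem).1
  have hc := (h1 _ hmem).2
  have hprev : bHeight t.2.1 t.2.2 n
      = h - (1 - (t.2.1 (n+1) : ℤ) - (t.2.2 (n+1) : ℤ)) := by
    have := bHeight_succ t.2.1 t.2.2 n
    rw [hend] at this; linarith
  have hh0 : 0 ≤ h := hend ▸ h2 _ hmem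
  refine ⟨hb, hc, hh0, ⟨⟨?_, ?_, ?_, ?_⟩, ?_⟩, ?_⟩
  · intro i hi
    simp only [Finset.mem_Icc] at hi
    rcases eq_or_ne i (n+1) with rfl | hne
    · refine ⟨?_, ?_, ?_⟩ <;> simp [ext]
    · simp only [ext, Function.update_of_ne hne]
      exact h0 i (by simp only [Finset.mem_Icc]; omega)
  · intro i hi
    simp only [Finset.mem_Icc] at hi
    have hne : i ≠ n+1 := by omega
    simp only [ext, Function.update_of_ne hne]
    exact h1 i (by simp only [Finset.mem_Icc]; omega)
  · intro i hi
    simp only [Finset.mem_Icc] at hi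
    rw [bHeight_ext_le n t 0 0 0 (by omega : i ≤ n)]
    exact h2 i (by simp only [Finset.mem_Icc]; omega)
  · intro i hi
    simp only [Finset.mem_Icc] at hi
    have hne : i ≠ n+1 := by omega
    rw [bHeight_ext_le n t 0 0 0 (by omega : i - 1 ≤ n),
      bHeight_ext_le n t 0 0 0 (by omega : i ≤ n)]
    simp only [ext, Function.update_of_ne hne]
    exact h3 i (by simp only [Finset.mem_Icc]; omega)
  · rw [bHeight_ext_le n t 0 0 0 le_rfl, hprev]
  · have := h3 (n+1) hmem
    simp only [Nat.add_sub_cancel] at this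
    rw [hprev] at this
    linarith [hend ▸ this]

def Dbc (n : ℕ) (h : ℤ) (b c : ℕ) : Set T3 :=
  {t | t ∈ D (n+1) h ∧ t.2.1 (n+1) = b ∧ t.2.2 (n+1) = c}

noncomputable def stepEquiv (n : ℕ) (h : ℤ) (b c : ℕ) (hb : b ≤ 1) (hc : c ≤ 1) :
    ↥(Dbc n h b c) ≃ ↥(D n (h - 1 + b + c)) × Fin ((2*h + b + c).toNat) where
  toFun t :=
    (⟨ext n t.1 0 0 0, by
        obtain ⟨hD, hβ, hγ⟩ := t.2
        have hres := (mem_D_succ_facts hD).2.2.2.1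
        rw [hβ, hγ] at hres
        convert hres using 2
        ring⟩,
      ⟨t.1.1 (n+1), by
        obtain ⟨hD, hβ, hγ⟩ := t.2
        have ha := (mem_D_succ_facts hD).2.2.2.2
        rw [hβ, hγ] at ha
        rw [Int.lt_toNat]
        push_cast
        linarith⟩)
  invFun p := ⟨ext n p.1.1 (p.2 : ℕ) b c, by
    have ha : ((p.2 : ℕ) : ℤ) < 2*h + b + c := Int.lt_toNat.mp p.2.2
    have hh0 : 0 ≤ h := by
      have hb' : (b:ℤ) ≤ 1 := by exact_mod_cast hb
      have hc' : (c:ℤ) ≤ 1 := by exact_mod_cast hc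
      have : (0:ℤ) ≤ ((p.2 : ℕ) : ℤ) := Int.natCast_nonneg _
      linarith
    have := ext_mem_D p.1.2 (p.2 : ℕ) b c hb hc
      (by push_cast; linarith) (by push_cast; linarith)
    refine ⟨?_, ?_, ?_⟩
    · convert this using 2; push_cast; ring
    · simp [ext]
    · simp [ext]⟩
  left_inv := by
    rintro ⟨⟨α, β, γ⟩, hD, hβ, hγ⟩
    refine Subtype.ext ?_
    have key : ∀ (f : ℕ → ℕ) (v : ℕ), f (n+1) = v →
        Function.update (Function.update f (n+1) 0) (n+1) v = f := by
      intro f v hv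
      rw [Function.update_idem, ← hv, Function.update_eq_self]
    show (_, _, _) = (α, β, γ)
    rw [Prod.mk.injEq, Prod.mk.injEq]
    exact ⟨key _ _ rfl, key _ _ hβ, key _ _ hγ⟩
  right_inv := by
    rintro ⟨⟨t', ht'⟩, a⟩
    have hz := (ht'.1.1 (n+1) (by simp only [Finset.mem_Icc]; omega))
    refine Prod.ext (Subtype.ext ?_) (Fin.ext ?_)
    · simp only [ext, Function.update_idem, Function.update_self]
      have e1 : Function.update t'.1 (n+1) 0 = t'.1 := by
        rw [show (0:ℕ) = t'.1 (n+1) from hz.1.symm]; exact Function.update_eq_self _ _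
      have e2 : Function.update t'.2.1 (n+1) 0 = t'.2.1 := by
        rw [show (0:ℕ) = t'.2.1 (n+1) from hz.2.1.symm]; exact Function.update_eq_self _ _
      have e3 : Function.update t'.2.2 (n+1) 0 = t'.2.2 := by
        rw [show (0:ℕ) = t'.2.2 (n+1) from hz.2.2.symm]; exact Function.update_eq_self _ _
      rw [e1, e2, e3]
    · simp [ext]

def F (n : ℕ) (h : ℤ) : ℕ := if 0 ≤ h then 2^n * n.factorial * n.choose h.toNat else 0

lemma choose_id (n m : ℕ) :
    (2*m+2) * n.choose m + (4*m+6) * n.choose (m+1) + (2*m+4) * n.choose (m+2)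
      = 2*(n+1) * (n+1).choose (m+1) := by
  rcases le_or_gt (m+1) n with hle | hlt
  · have A := Nat.choose_succ_right_eq n (m+1)
    have B := Nat.choose_succ_right_eq n m
    rw [Nat.choose_succ_succ]
    zify [hle, (by omega : m ≤ n)] at A B ⊢
    linear_combination 2*A + 2*B
  · have h1 : n.choose (m+1) = 0 := Nat.choose_eq_zero_of_lt (by omega)
    have h2 : n.choose (m+2) = 0 := Nat.choose_eq_zero_of_lt (by omega)
    rcases eq_or_lt_of_le (by omega : n ≤ m) with rfl | hlt2
    · simp [h1, h2, Nat.choose_self]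
      omega
    · have h3 : n.choose m = 0 := Nat.choose_eq_zero_of_lt hlt2
      have h4 : (n+1).choose (m+1) = 0 := Nat.choose_eq_zero_of_lt (by omega)
      simp [h1, h2, h3, h4]

lemma F_step (n : ℕ) (h : ℤ) :
    F n (h-1) * (2*h).toNat + F n h * (2*h+1).toNat + F n h * (2*h+1).toNat
      + F n (h+1) * (2*h+2).toNat = F (n+1) h := by
  rcases lt_or_ge h 0 with hneg | hpos
  · have e1 : F n (h-1) = 0 := if_neg (by omega)
    have e2 : F n h = 0 := if_neg (by omega)
    have e3 : (2*h+2).toNat = 0 := by omega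
    have e4 : F (n+1) h = 0 := if_neg (by omega)
    rw [e1, e2, e3, e4]
    ring
  · obtain ⟨k, rfl⟩ : ∃ k : ℕ, h = (k : ℤ) := ⟨h.toNat, (Int.toNat_of_nonneg hpos).symm⟩
    rcases k with _ | m
    · have e1 : F n (((0:ℕ):ℤ)-1) = 0 := if_neg (by norm_num)
      have e2 : F n ((0:ℕ):ℤ) = 2^n * n.factorial := by
        rw [F, if_pos (by norm_num)]
        norm_num
      have e3 : F n (((0:ℕ):ℤ)+1) = 2^n * n.factorial * n := by
        rw [F, if_pos (by norm_num)]
        norm_num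
      have e4 : F (n+1) ((0:ℕ):ℤ) = 2^(n+1) * (n+1).factorial := by
        rw [F, if_pos (by norm_num)]
        norm_num
      have t0 : ((2:ℤ)*((0:ℕ):ℤ)).toNat = 0 := by norm_num
      have t1 : ((2:ℤ)*((0:ℕ):ℤ)+1).toNat = 1 := by norm_num
      have t2 : ((2:ℤ)*((0:ℕ):ℤ)+2).toNat = 2 := by simp
      rw [e1, e2, e3, e4, t0, t1, t2, Nat.factorial_succ]
      ring
    · have e0 : ((m:ℤ)+1-1) = (m:ℤ) := by ring
      have e1 : F n ((m:ℤ)) = 2^n * n.factorial * n.choose m := by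
        rw [F, if_pos (by positivity), Int.toNat_natCast]
      have e2 : F n ((m+1 : ℕ) : ℤ) = 2^n * n.factorial * n.choose (m+1) := by
        rw [F, if_pos (by positivity), Int.toNat_natCast]
      have e3 : F n (((m+1 : ℕ) : ℤ)+1) = 2^n * n.factorial * n.choose (m+2) := by
        rw [F, if_pos (by positivity),
          show ((((m+1:ℕ)):ℤ)+1).toNat = m + 2 by push_cast; omega]
      have e4 : F (n+1) ((m+1 : ℕ) : ℤ) = 2^(n+1) * (n+1).factorial * (n+1).choose (m+1) := by
        rw [F, if_pos (by positivity), Int.toNat_natCast]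
      have t1 : ((2:ℤ)*((m+1:ℕ):ℤ)).toNat = 2*m+2 := by push_cast; omega
      have t2 : ((2:ℤ)*((m+1:ℕ):ℤ)+1).toNat = 2*m+3 := by push_cast; omega
      have t3 : ((2:ℤ)*((m+1:ℕ):ℤ)+2).toNat = 2*m+4 := by push_cast; omega
      rw [show (((m+1:ℕ):ℤ) - 1) = (m:ℤ) by push_cast; ring, e1, e2, e3, e4, t1, t2, t3]
      have key := choose_id n m
      have expand : 2^(n+1) * (n+1).factorial * (n+1).choose (m+1)
          = 2^n * n.factorial * (2*(n+1) * (n+1).choose (m+1)) := by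
        rw [Nat.factorial_succ]; ring
      rw [expand, ← key]
      ring

lemma Dbc_card {n : ℕ} {h : ℤ} {b c : ℕ} (hb : b ≤ 1) (hc : c ≤ 1)
    (hfin : (D n (h-1+b+c)).Finite) :
    (Dbc n h b c).Finite ∧
      (Dbc n h b c).ncard = (D n (h-1+b+c)).ncard * (2*h+b+c).toNat := by
  have e := stepEquiv n h b c hb hc
  have : Finite ↥(D n (h-1+b+c)) := Set.finite_coe_iff.mpr hfin
  have fin2 : Finite ↥(Dbc n h b c) := Finite.of_equiv _ e.symm
  refine ⟨Set.finite_coe_iff.mp fin2, ?_⟩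
  rw [← Nat.card_coe_set_eq, Nat.card_congr e, Nat.card_prod,
    Nat.card_coe_set_eq, Nat.card_eq_fintype_card, Fintype.card_fin]

lemma D_succ_eq (n : ℕ) (h : ℤ) :
    D (n+1) h = Dbc n h 0 0 ∪ Dbc n h 0 1 ∪ Dbc n h 1 0 ∪ Dbc n h 1 1 := by
  ext t
  simp only [Set.mem_union, Dbc, Set.mem_setOf_eq]
  constructor
  · intro ht
    obtain ⟨hb, hc, -, -, -⟩ := mem_D_succ_facts ht
    have hb' : t.2.1 (n+1) = 0 ∨ t.2.1 (n+1) = 1 := by omega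
    have hc' : t.2.2 (n+1) = 0 ∨ t.2.2 (n+1) = 1 := by omega
    rcases hb' with hb' | hb' <;> rcases hc' with hc' | hc' <;> tauto
  · rintro (((⟨h1, -⟩ | ⟨h1, -⟩) | ⟨h1, -⟩) | ⟨h1, -⟩) <;> exact h1

lemma Dbc_disjoint {n : ℕ} {h : ℤ} {b c b' c' : ℕ} (hne : b ≠ b' ∨ c ≠ c') :
    Disjoint (Dbc n h b c) (Dbc n h b' c') := by
  rw [Set.disjoint_left]
  rintro t ⟨-, e1, e2⟩ ⟨-, e3, e4⟩
  rcases hne with hne | hne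
  · exact hne (e1 ▸ e3)
  · exact hne (e2 ▸ e4)

lemma D_card (n : ℕ) : ∀ (h : ℤ), (D n h).Finite ∧ (D n h).ncard = F n h := by
  induction n with
  | zero =>
    intro h
    have hIcc : Finset.Icc 1 0 = ∅ := by decide
    have hbz : ∀ β γ : ℕ → ℕ, bHeight β γ 0 = 0 := by
      intro β γ
      unfold bHeight
      rw [hIcc, Finset.sum_empty]
    have hD : D 0 h = if h = 0 then {((fun _ => 0, fun _ => 0, fun _ => 0) : T3)} else ∅ := by
      ext t
      constructor
      · rintro ⟨⟨h0, -, -, -⟩, hend⟩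
        have hh : h = 0 := by rw [← hend, hbz]
        subst hh
        rw [if_pos rfl]
        simp only [Set.mem_singleton_iff]
        have hz : ∀ i, t.1 i = 0 ∧ t.2.1 i = 0 ∧ t.2.2 i = 0 :=
          fun i => h0 i (by rw [hIcc]; exact Finset.notMem_empty i)
        refine Prod.ext ?_ (Prod.ext ?_ ?_) <;> funext i
        exacts [(hz i).1, (hz i).2.1, (hz i).2.2]
      · intro ht
        rcases eq_or_ne h 0 with rfl | hne
        · rw [if_pos rfl] at ht
          simp only [Set.mem_singleton_iff] at ht
          subst ht
          refine ⟨⟨fun i _ => ⟨rfl, rfl, rfl⟩, ?_, ?_, ?_⟩, hbz _ _⟩ <;>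
          · intro i hi
            rw [hIcc] at hi
            exact absurd hi (Finset.notMem_empty i)
        · rw [if_neg hne] at ht
          exact absurd ht (Set.notMem_empty t)
    constructor
    · rw [hD]
      split
      · exact Set.finite_singleton _
      · exact Set.finite_empty
    · rw [hD]
      rcases eq_or_ne h 0 with rfl | hne
      · rw [if_pos rfl, Set.ncard_singleton]
        simp [F]
      · rw [if_neg hne, Set.ncard_empty]
        rcases lt_or_ge h 0 with hneg | hpos2
        · rw [F, if_neg (by omega)]
        · rw [F, if_pos hpos2, Nat.choose_eq_zero_of_lt (by omega : 0 < h.toNat), mul_zero]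
  | succ n IH =>
    intro h
    have c00 := Dbc_card (n := n) (h := h) (b := 0) (c := 0) (by norm_num) (by norm_num)
      (IH _).1
    have c01 := Dbc_card (n := n) (h := h) (b := 0) (c := 1) (by norm_num) (by norm_num)
      (IH _).1
    have c10 := Dbc_card (n := n) (h := h) (b := 1) (c := 0) (by norm_num) (by norm_num)
      (IH _).1
    have c11 := Dbc_card (n := n) (h := h) (b := 1) (c := 1) (by norm_num) (by norm_num)
      (IH _).1
    rw [D_succ_eq]
    have d1 : Disjoint (Dbc n h 0 0) (Dbc n h 0 1) := Dbc_disjoint (Or.inr (by norm_num))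
    have d2 : Disjoint (Dbc n h 0 0 ∪ Dbc n h 0 1) (Dbc n h 1 0) :=
      Set.disjoint_union_left.mpr
        ⟨Dbc_disjoint (Or.inl (by norm_num)), Dbc_disjoint (Or.inl (by norm_num))⟩
    have d3 : Disjoint (Dbc n h 0 0 ∪ Dbc n h 0 1 ∪ Dbc n h 1 0) (Dbc n h 1 1) := by
      refine Set.disjoint_union_left.mpr ⟨Set.disjoint_union_left.mpr ⟨?_, ?_⟩, ?_⟩
      · exact Dbc_disjoint (Or.inl (by norm_num))
      · exact Dbc_disjoint (Or.inl (by norm_num))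
      · exact Dbc_disjoint (Or.inr (by norm_num))
    constructor
    · exact (((c00.1.union c01.1).union c10.1).union c11.1)
    · rw [Set.ncard_union_eq d3 ((c00.1.union c01.1).union c10.1) c11.1,
        Set.ncard_union_eq d2 (c00.1.union c01.1) c10.1,
        Set.ncard_union_eq d1 c00.1 c01.1,
        c00.2, c01.2, c10.2, c11.2, (IH _).2, (IH _).2, (IH _).2, (IH _).2]
      rw [← F_step n h]
      push_cast
      ring_nf

lemma bHeight_le_n (β γ : ℕ → ℕ) (n : ℕ) : bHeight β γ n ≤ (n : ℤ) := by
  unfold bHeight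
  calc ∑ j ∈ Finset.Icc 1 n, (1 - (β j : ℤ) - (γ j : ℤ))
      ≤ ∑ _j ∈ Finset.Icc 1 n, (1 : ℤ) :=
        Finset.sum_le_sum fun j _ => by
          have h1 : (0:ℤ) ≤ (β j : ℤ) := Int.natCast_nonneg _
          have h2 : (0:ℤ) ≤ (γ j : ℤ) := Int.natCast_nonneg _
          linarith
    _ = (n : ℤ) := by
        rw [Finset.sum_const, Nat.card_Icc]
        simp

noncomputable def totalEquiv (n : ℕ) (hn : 1 ≤ n) :
    ↥{t : T3 | IsBDatum n t.1 t.2.1 t.2.2} ≃ (h : Fin (n+1)) × ↥(D n ((h : ℕ) : ℤ)) where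
  toFun t :=
    ⟨⟨(bHeight t.1.2.1 t.1.2.2 n).toNat, by
        have := bHeight_le_n t.1.2.1 t.1.2.2 n
        omega⟩,
      ⟨t.1, ⟨t.2, by
        have h0 : 0 ≤ bHeight t.1.2.1 t.1.2.2 n :=
          t.2.2.2.1 n (by simp only [Finset.mem_Icc]; omega)
        exact (Int.toNat_of_nonneg h0).symm⟩⟩⟩
  invFun p := ⟨p.2.1, p.2.2.1⟩
  left_inv t := Subtype.ext rfl
  right_inv := by
    rintro ⟨⟨k, hk⟩, t, ht⟩
    have hkey : (bHeight t.2.1 t.2.2 n).toNat = k := by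
      rw [ht.2, Int.toNat_natCast]
    subst hkey
    rfl

lemma total_card (n : ℕ) (hn : 1 ≤ n) :
    {t : T3 | IsBDatum n t.1 t.2.1 t.2.2}.ncard = 4 ^ n * n.factorial := by
  classical
  haveI : ∀ h : Fin (n+1), Fintype ↥(D n ((h : ℕ) : ℤ)) :=
    fun h => (D_card n _).1.fintype
  rw [← Nat.card_coe_set_eq, Nat.card_congr (totalEquiv n hn),
    Nat.card_eq_fintype_card, Fintype.card_sigma]
  have hterm : ∀ h : Fin (n+1),
      Fintype.card ↥(D n ((h : ℕ) : ℤ)) = 2^n * n.factorial * n.choose (h : ℕ) := by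
    intro h
    rw [← Nat.card_eq_fintype_card, Nat.card_coe_set_eq, (D_card n _).2, F,
      if_pos (Int.natCast_nonneg _), Int.toNat_natCast]
  rw [Finset.sum_congr rfl (fun h _ => hterm h)]
  rw [Fin.sum_univ_eq_sum_range (fun k => 2^n * n.factorial * n.choose k) (n+1),
    ← Finset.mul_sum, Nat.sum_range_choose]
  have : 4^n = 2^n * 2^n := by
    rw [← Nat.mul_pow]
  rw [this]
  ring

end BAux

/-- The number of type-B (1,2)-data of length `n ≥ 1` is `4^n · n!`. -/
theorem card_bdatum (n : ℕ) (hn : 1 ≤ n) :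
    {t : (ℕ → ℕ) × (ℕ → ℕ) × (ℕ → ℕ) | IsBDatum n t.1 t.2.1 t.2.2}.ncard
      = 4 ^ n * n.factorial := by
  exact BAux.total_card n hn
end

section
/- For all integers n ≥ 1 and r ≥ 0, the following closed forms hold: p_E(n, 2r) = (n−1)! · 2^n · C(n−1, r) · (2r+1); p_U(n, 2r+1) = (n−1)! · 2^n · C(n−1, r) · (r+1); and p_D(n, 2r+1) = (n−1)! · 2^n · C(n−1, r) · (n−r−1) (as an identity of integers, where both sides are 0 when r ≥ n). Here C denotes the ordinary binomial coefficient. -/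
/-- `pE n r`: the number of type-B (1,2)-data of length `n` with
`h_{n-1} + h_n = r` whose last step is a horizontal step (`β_n + γ_n = 1`). -/
noncomputable def pE (n : ℕ) (r : ℤ) : ℕ :=
  {t : (ℕ → ℕ) × (ℕ → ℕ) × (ℕ → ℕ) | IsBDatum n t.1 t.2.1 t.2.2 ∧
    bHeight t.2.1 t.2.2 (n - 1) + bHeight t.2.1 t.2.2 n = r ∧
    t.2.1 n + t.2.2 n = 1}.ncard

/-- `pU n r`: the number of type-B (1,2)-data of length `n` with
`h_{n-1} + h_n = r` whose last step is an up-step (`β_n = γ_n = 0`). -/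
noncomputable def pU (n : ℕ) (r : ℤ) : ℕ :=
  {t : (ℕ → ℕ) × (ℕ → ℕ) × (ℕ → ℕ) | IsBDatum n t.1 t.2.1 t.2.2 ∧
    bHeight t.2.1 t.2.2 (n - 1) + bHeight t.2.1 t.2.2 n = r ∧
    t.2.1 n = 0 ∧ t.2.2 n = 0}.ncard

/-- `pD n r`: the number of type-B (1,2)-data of length `n` with
`h_{n-1} + h_n = r` whose last step is a down-step (`β_n = γ_n = 1`). -/
noncomputable def pD (n : ℕ) (r : ℤ) : ℕ :=
  {t : (ℕ → ℕ) × (ℕ → ℕ) × (ℕ → ℕ) | IsBDatum n t.1 t.2.1 t.2.2 ∧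
    bHeight t.2.1 t.2.2 (n - 1) + bHeight t.2.1 t.2.2 n = r ∧
    t.2.1 n = 1 ∧ t.2.2 n = 1}.ncard

lemma bHeight_zero (β γ : ℕ → ℕ) : bHeight β γ 0 = 0 := by simp [bHeight]

lemma bHeight_succ (β γ : ℕ → ℕ) (n : ℕ) :
    bHeight β γ (n + 1) = bHeight β γ n + (1 - (β (n + 1) : ℤ) - (γ (n + 1) : ℤ)) :=
  Finset.sum_Icc_succ_top (by omega) _

lemma bHeight_congr {β γ β' γ' : ℕ → ℕ} {i : ℕ}
    (hβ : ∀ j ∈ Finset.Icc 1 i, β j = β' j) (hγ : ∀ j ∈ Finset.Icc 1 i, γ j = γ' j) :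
    bHeight β γ i = bHeight β' γ' i :=
  Finset.sum_congr rfl fun j hj => by rw [hβ j hj, hγ j hj]

lemma bHeight_update {β γ : ℕ → ℕ} {n i : ℕ} (hi : i < n) (b c : ℕ) :
    bHeight (Function.update β n b) (Function.update γ n c) i = bHeight β γ i :=
  bHeight_congr
    (fun j hj => Function.update_of_ne (by rw [Finset.mem_Icc] at hj; omega) _ _)
    (fun j hj => Function.update_of_ne (by rw [Finset.mem_Icc] at hj; omega) _ _)

lemma bHeight_nonneg {n : ℕ} {α β γ : ℕ → ℕ} (h : IsBDatum n α β γ) {i : ℕ} (hi : i ≤ n) :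
    0 ≤ bHeight β γ i := by
  rcases Nat.eq_zero_or_pos i with rfl | hpos
  · simp [bHeight_zero]
  · exact h.2.2.1 i (Finset.mem_Icc.mpr ⟨hpos, hi⟩)

lemma bHeight_ext_top (β γ : ℕ → ℕ) (m b c : ℕ) :
    bHeight (Function.update β (m+1) b) (Function.update γ (m+1) c) (m+1)
      = bHeight β γ m + (1 - (b : ℤ) - c) := by
  rw [bHeight_succ, bHeight_update (Nat.lt_succ_self m), Function.update_self,
    Function.update_self]

lemma isBDatum_ext {m : ℕ} {α β γ : ℕ → ℕ} (hs : IsBDatum m α β γ) {a b c : ℕ}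
    (hb : b ≤ 1) (hc : c ≤ 1)
    (h1 : 0 ≤ bHeight β γ m + (1 - (b:ℤ) - c))
    (h2 : (a : ℤ) ≤ 2 * bHeight β γ m + (1 - (b:ℤ) - c)) :
    IsBDatum (m + 1) (Function.update α (m+1) a) (Function.update β (m+1) b)
      (Function.update γ (m+1) c) := by
  obtain ⟨s1, s2, s3, s4⟩ := hs
  have hup : ∀ i, i ≤ m →
      bHeight (Function.update β (m+1) b) (Function.update γ (m+1) c) i = bHeight β γ i :=
    fun i hi => bHeight_update (by omega) _ _
  refine ⟨?_, ?_, ?_, ?_⟩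
  · intro i hi
    rw [Finset.mem_Icc] at hi
    have hne : i ≠ m + 1 := by omega
    obtain ⟨e1, e2, e3⟩ := s1 i (by rw [Finset.mem_Icc]; omega)
    simp [Function.update_of_ne hne, e1, e2, e3]
  · intro i hi
    rw [Finset.mem_Icc] at hi
    rcases eq_or_ne i (m+1) with rfl | hne
    · simp [Function.update_self, hb, hc]
    · simp only [Function.update_of_ne hne]
      exact s2 i (by rw [Finset.mem_Icc]; omega)
  · intro i hi
    rw [Finset.mem_Icc] at hi
    rcases eq_or_ne i (m+1) with rfl | hne
    · rw [bHeight_ext_top]; exact h1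
    · have hle : i ≤ m := by omega
      rw [hup i hle]
      exact s3 i (by rw [Finset.mem_Icc]; omega)
  · intro i hi
    rw [Finset.mem_Icc] at hi
    rcases eq_or_ne i (m+1) with rfl | hne
    · rw [Function.update_self, bHeight_ext_top]
      have hmm : m + 1 - 1 = m := rfl
      rw [hmm, hup m le_rfl]
      linarith
    · have hle : i ≤ m := by omega
      rw [Function.update_of_ne hne, hup i hle, hup (i-1) (by omega)]
      exact s4 i (by rw [Finset.mem_Icc]; omega)

lemma isBDatum_trunc {m : ℕ} {α β γ : ℕ → ℕ} (ht : IsBDatum (m+1) α β γ) :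
    IsBDatum m (Function.update α (m+1) 0) (Function.update β (m+1) 0)
      (Function.update γ (m+1) 0) := by
  obtain ⟨s1, s2, s3, s4⟩ := ht
  have hup : ∀ i, i ≤ m →
      bHeight (Function.update β (m+1) 0) (Function.update γ (m+1) 0) i = bHeight β γ i :=
    fun i hi => bHeight_update (by omega) _ _
  refine ⟨?_, ?_, ?_, ?_⟩
  · intro i hi
    rw [Finset.mem_Icc] at hi
    rcases eq_or_ne i (m+1) with rfl | hne
    · simp
    · obtain ⟨e1, e2, e3⟩ := s1 i (by rw [Finset.mem_Icc]; omega)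
      simp [Function.update_of_ne hne, e1, e2, e3]
  · intro i hi
    rw [Finset.mem_Icc] at hi
    simp only [Function.update_of_ne (show i ≠ m+1 by omega)]
    exact s2 i (by rw [Finset.mem_Icc]; omega)
  · intro i hi
    rw [Finset.mem_Icc] at hi
    rw [hup i hi.2]
    exact s3 i (by rw [Finset.mem_Icc]; omega)
  · intro i hi
    rw [Finset.mem_Icc] at hi
    rw [Function.update_of_ne (show i ≠ m+1 by omega), hup i hi.2, hup (i-1) (by omega)]
    exact s4 i (by rw [Finset.mem_Icc]; omega)

def QSet (m : ℕ) (h : ℤ) : Set ((ℕ → ℕ) × (ℕ → ℕ) × (ℕ → ℕ)) :=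
  {t | IsBDatum m t.1 t.2.1 t.2.2 ∧ bHeight t.2.1 t.2.2 m = h}

noncomputable def Qc (m : ℕ) (h : ℤ) : ℕ := (QSet m h).ncard

def TSet (m : ℕ) (r : ℤ) (b c : ℕ) : Set ((ℕ → ℕ) × (ℕ → ℕ) × (ℕ → ℕ)) :=
  {t | IsBDatum (m + 1) t.1 t.2.1 t.2.2 ∧
    bHeight t.2.1 t.2.2 m + bHeight t.2.1 t.2.2 (m + 1) = r ∧
    t.2.1 (m + 1) = b ∧ t.2.2 (m + 1) = c}

def extT (m a b c : ℕ) (t : (ℕ → ℕ) × (ℕ → ℕ) × (ℕ → ℕ)) : (ℕ → ℕ) × (ℕ → ℕ) × (ℕ → ℕ) :=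
  (Function.update t.1 (m+1) a, Function.update t.2.1 (m+1) b, Function.update t.2.2 (m+1) c)

lemma bijOn_ext (m b c : ℕ) (hb : b ≤ 1) (hc : c ≤ 1) (g : ℤ) :
    Set.BijOn (fun p : ((ℕ → ℕ) × (ℕ → ℕ) × (ℕ → ℕ)) × ℕ => extT m p.2 b c p.1)
      (QSet m g ×ˢ Set.Iio (2 * g + (1 - (b:ℤ) - c) + 1).toNat)
      (TSet m (2 * g + (1 - (b:ℤ) - c)) b c) := by
  refine ⟨?_, ?_, ?_⟩
  · rintro ⟨⟨α, β, γ⟩, a⟩ ⟨⟨hd, hh⟩, ha⟩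
    simp only [Set.mem_Iio] at ha
    have haz : (a:ℤ) < 2*g + (1 - (b:ℤ) - c) + 1 := Int.lt_toNat.mp ha
    have hg0 : 0 ≤ g := hh ▸ bHeight_nonneg hd le_rfl
    have h1 : 0 ≤ bHeight β γ m + (1 - (b:ℤ) - c) := by rw [hh]; omega
    have h2 : (a : ℤ) ≤ 2 * bHeight β γ m + (1 - (b:ℤ) - c) := by rw [hh]; omega
    simp only [TSet, extT, Set.mem_setOf_eq]
    refine ⟨isBDatum_ext hd hb hc h1 h2, ?_, Function.update_self _ _ _,
      Function.update_self _ _ _⟩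
    rw [bHeight_update (Nat.lt_succ_self m), bHeight_ext_top, hh]
    ring
  · rintro ⟨⟨α, β, γ⟩, a⟩ ⟨⟨hd, hh⟩, ha⟩ ⟨⟨α', β', γ'⟩, a'⟩ ⟨⟨hd', hh'⟩, ha'⟩ heq
    simp only [extT, Prod.mk.injEq] at heq
    obtain ⟨e1, e2, e3⟩ := heq
    have hz : ∀ (f f' : ℕ → ℕ) (x y : ℕ), f (m+1) = 0 → f' (m+1) = 0 →
        Function.update f (m+1) x = Function.update f' (m+1) y → f = f' ∧ x = y := by
      intro f f' x y h0 h0' he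
      constructor
      · funext i
        rcases eq_or_ne i (m+1) with rfl | hne
        · rw [h0, h0']
        · have := congrFun he i
          rwa [Function.update_of_ne hne, Function.update_of_ne hne] at this
      · have := congrFun he (m+1)
        rwa [Function.update_self, Function.update_self] at this
    have n1 : (m+1) ∉ Finset.Icc 1 m := by rw [Finset.mem_Icc]; omega
    obtain ⟨z1, z2, z3⟩ := hd.1 (m+1) n1
    obtain ⟨z1', z2', z3'⟩ := hd'.1 (m+1) n1
    obtain ⟨f1, fa⟩ := hz α α' a a' z1 z1' e1
    obtain ⟨f2, -⟩ := hz β β' b b z2 z2' e2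
    obtain ⟨f3, -⟩ := hz γ γ' c c z3 z3' e3
    subst f1; subst f2; subst f3; subst fa; rfl
  · rintro ⟨α, β, γ⟩ ⟨hd, hr, hbb, hcc⟩
    dsimp only at hd hr hbb hcc
    have hstep : bHeight β γ (m+1) = bHeight β γ m + (1 - (b:ℤ) - c) := by
      rw [bHeight_succ, hbb, hcc]
    have hg : bHeight β γ m = g := by linarith [hr, hstep]
    have h4 := hd.2.2.2 (m+1) (Finset.mem_Icc.mpr ⟨by omega, le_rfl⟩)
    rw [show m + 1 - 1 = m from rfl] at h4
    have hle : (α (m+1) : ℤ) ≤ 2*g + (1 - (b:ℤ) - c) := by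
      rw [← hr]; exact h4
    refine ⟨⟨(Function.update α (m+1) 0, Function.update β (m+1) 0,
        Function.update γ (m+1) 0), α (m+1)⟩, ⟨⟨isBDatum_trunc hd, ?_⟩, ?_⟩, ?_⟩
    · rw [bHeight_update (Nat.lt_succ_self m), hg]
    · simp only [Set.mem_Iio]
      exact Int.lt_toNat.mpr (by omega)
    · simp only [extT]
      refine Prod.ext ?_ (Prod.ext ?_ ?_)
      · rw [Function.update_idem, Function.update_eq_self]
      · show Function.update (Function.update β (m+1) 0) (m+1) b = β
        rw [Function.update_idem, ← hbb, Function.update_eq_self]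
      · show Function.update (Function.update γ (m+1) 0) (m+1) c = γ
        rw [Function.update_idem, ← hcc, Function.update_eq_self]

lemma ncard_prod' {A B : Type*} (s : Set A) (t : Set B) :
    (s ×ˢ t).ncard = s.ncard * t.ncard := by
  rw [← Nat.card_coe_set_eq, ← Nat.card_coe_set_eq, ← Nat.card_coe_set_eq,
    Nat.card_congr (Equiv.Set.prod s t), Nat.card_prod]

lemma ncard_Iio_nat (k : ℕ) : (Set.Iio k).ncard = k := by
  rw [← Finset.coe_Iio, Set.ncard_coe_finset, Nat.card_Iio]

lemma ncard_TSet (m : ℕ) {b c : ℕ} (hb : b ≤ 1) (hc : c ≤ 1) (g r : ℤ)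
    (hr : r = 2 * g + (1 - (b:ℤ) - c)) :
    (TSet m r b c).ncard = Qc m g * (r + 1).toNat := by
  subst hr
  have hbij := bijOn_ext m b c hb hc g
  rw [← hbij.image_eq, Set.ncard_image_of_injOn hbij.injOn, ncard_prod', ncard_Iio_nat]
  rfl

lemma finite_TSet (m : ℕ) {b c : ℕ} (hb : b ≤ 1) (hc : c ≤ 1) (g r : ℤ)
    (hr : r = 2 * g + (1 - (b:ℤ) - c)) (hq : (QSet m g).Finite) :
    (TSet m r b c).Finite := by
  subst hr
  have hbij := bijOn_ext m b c hb hc g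
  rw [← hbij.image_eq]
  exact (hq.prod (Set.finite_Iio _)).image _


lemma QSet_zero (h : ℤ) :
    QSet 0 h = if h = 0 then {((fun _ => 0), (fun _ => 0), fun _ => 0)} else ∅ := by
  have hicc : ∀ i : ℕ, i ∉ Finset.Icc 1 0 := by intro i; rw [Finset.mem_Icc]; omega
  ext ⟨a, b, c⟩
  simp only [QSet, Set.mem_setOf_eq]
  split_ifs with h0
  · subst h0
    simp only [Set.mem_singleton_iff, Prod.mk.injEq]
    constructor
    · rintro ⟨⟨d1, -, -, -⟩, -⟩
      exact ⟨funext fun i => (d1 i (hicc i)).1, funext fun i => (d1 i (hicc i)).2.1,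
        funext fun i => (d1 i (hicc i)).2.2⟩
    · rintro ⟨rfl, rfl, rfl⟩
      exact ⟨⟨fun i _ => ⟨rfl, rfl, rfl⟩, fun i hi => absurd hi (hicc i),
        fun i hi => absurd hi (hicc i), fun i hi => absurd hi (hicc i)⟩, bHeight_zero _ _⟩
  · simp only [Set.mem_empty_iff_false, iff_false]
    rintro ⟨-, hh⟩
    exact h0 (by rw [← hh, bHeight_zero])

lemma Qc_zero (h : ℤ) : Qc 0 h = if h = 0 then 1 else 0 := by
  rw [Qc, QSet_zero]
  split_ifs <;> simp

lemma QSet_succ (m : ℕ) (h : ℤ) :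
    QSet (m+1) h = ((TSet m (2*h) 1 0 ∪ TSet m (2*h) 0 1) ∪ TSet m (2*h-1) 0 0)
      ∪ TSet m (2*h+1) 1 1 := by
  ext ⟨α, β, γ⟩
  simp only [QSet, TSet, Set.mem_setOf_eq, Set.mem_union]
  constructor
  · rintro ⟨hd, hh⟩
    obtain ⟨hb1, hc1⟩ := hd.2.1 (m+1) (Finset.mem_Icc.mpr ⟨by omega, le_rfl⟩)
    have hstep := bHeight_succ β γ m
    have hb01 : β (m+1) = 0 ∨ β (m+1) = 1 := by omega
    have hc01 : γ (m+1) = 0 ∨ γ (m+1) = 1 := by omega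
    rcases hb01 with hb | hb <;> rcases hc01 with hc | hc <;> rw [hb, hc] at hstep <;>
        push_cast at hstep
    · exact Or.inl (Or.inr ⟨hd, by linarith, hb, hc⟩)
    · exact Or.inl (Or.inl (Or.inr ⟨hd, by linarith, hb, hc⟩))
    · exact Or.inl (Or.inl (Or.inl ⟨hd, by linarith, hb, hc⟩))
    · exact Or.inr ⟨hd, by linarith, hb, hc⟩
  · rintro (((⟨hd, hr, hb, hc⟩ | ⟨hd, hr, hb, hc⟩) | ⟨hd, hr, hb, hc⟩) | ⟨hd, hr, hb, hc⟩) <;>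
      refine ⟨hd, ?_⟩ <;>
      [skip; skip; skip; skip] <;>
      · have hstep := bHeight_succ β γ m
        rw [hb, hc] at hstep
        push_cast at hstep
        linarith

lemma disj_TSet {m : ℕ} {r r' : ℤ} {b c b' c' : ℕ} (hne : b ≠ b' ∨ c ≠ c') :
    Disjoint (TSet m r b c) (TSet m r' b' c') := by
  rw [Set.disjoint_left]
  rintro ⟨α, β, γ⟩ ⟨-, -, hb, hc⟩ ⟨-, -, hb', hc'⟩
  dsimp only at hb hc hb' hc'
  rcases hne with h | h <;> omega

lemma finite_QSet : ∀ (m : ℕ) (h : ℤ), (QSet m h).Finite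
  | 0, h => by
    rw [QSet_zero]
    split_ifs <;> simp
  | (m+1), h => by
    rw [QSet_succ]
    refine (((finite_TSet m (by omega) (by omega) h (2*h) (by push_cast; ring)
        (finite_QSet m h)).union
      (finite_TSet m (by omega) (by omega) h (2*h) (by push_cast; ring)
        (finite_QSet m h))).union
      (finite_TSet m (by omega) (by omega) (h-1) (2*h-1) (by push_cast; ring)
        (finite_QSet m (h-1)))).union
      (finite_TSet m (by omega) (by omega) (h+1) (2*h+1) (by push_cast; ring)
        (finite_QSet m (h+1)))

lemma Qc_succ (m h : ℕ) :
    Qc (m+1) (h : ℤ) = Qc m h * (2*h+1) + Qc m h * (2*h+1)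
      + Qc m ((h:ℤ)-1) * (2*((h:ℤ)-1)+2).toNat + Qc m ((h:ℤ)+1) * (2*h+2) := by
  have d1 : Disjoint (TSet m (2*(h:ℤ)) 1 0) (TSet m (2*(h:ℤ)) 0 1) :=
    disj_TSet (Or.inl (by omega))
  have d2 : Disjoint (TSet m (2*(h:ℤ)) 1 0 ∪ TSet m (2*(h:ℤ)) 0 1)
      (TSet m (2*(h:ℤ)-1) 0 0) :=
    Set.disjoint_union_left.mpr ⟨disj_TSet (Or.inl (by omega)), disj_TSet (Or.inr (by omega))⟩
  have d3 : Disjoint ((TSet m (2*(h:ℤ)) 1 0 ∪ TSet m (2*(h:ℤ)) 0 1) ∪ TSet m (2*(h:ℤ)-1) 0 0)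
      (TSet m (2*(h:ℤ)+1) 1 1) :=
    Set.disjoint_union_left.mpr ⟨Set.disjoint_union_left.mpr
      ⟨disj_TSet (Or.inr (by omega)), disj_TSet (Or.inl (by omega))⟩,
      disj_TSet (Or.inr (by omega))⟩
  have f1 := finite_TSet m (show (1:ℕ) ≤ 1 by omega) (show (0:ℕ) ≤ 1 by omega) h (2*(h:ℤ))
    (by push_cast; ring) (finite_QSet m h)
  have f2 := finite_TSet m (show (0:ℕ) ≤ 1 by omega) (show (1:ℕ) ≤ 1 by omega) h (2*(h:ℤ))
    (by push_cast; ring) (finite_QSet m h)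
  have f3 := finite_TSet m (show (0:ℕ) ≤ 1 by omega) (show (0:ℕ) ≤ 1 by omega) ((h:ℤ)-1)
    (2*(h:ℤ)-1) (by push_cast; ring) (finite_QSet m _)
  have f4 := finite_TSet m (show (1:ℕ) ≤ 1 by omega) (show (1:ℕ) ≤ 1 by omega) ((h:ℤ)+1)
    (2*(h:ℤ)+1) (by push_cast; ring) (finite_QSet m _)
  rw [Qc, QSet_succ, Set.ncard_union_eq d3 ((f1.union f2).union f3) f4,
    Set.ncard_union_eq d2 (f1.union f2) f3, Set.ncard_union_eq d1 f1 f2,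
    ncard_TSet m (by omega) (by omega) h (2*(h:ℤ)) (by push_cast; ring),
    ncard_TSet m (by omega) (by omega) h (2*(h:ℤ)) (by push_cast; ring),
    ncard_TSet m (by omega) (by omega) ((h:ℤ)-1) (2*(h:ℤ)-1) (by push_cast; ring),
    ncard_TSet m (by omega) (by omega) ((h:ℤ)+1) (2*(h:ℤ)+1) (by push_cast; ring)]
  have t1 : ((2*(h:ℤ))+1).toNat = 2*h+1 := by omega
  have t2 : ((2*(h:ℤ)-1)+1).toNat = (2*((h:ℤ)-1)+2).toNat := by omega
  have t3 : ((2*(h:ℤ)+1)+1).toNat = 2*h+2 := by omega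
  rw [t1, t2, t3]

lemma key_id (m k : ℕ) :
    (2*k+3) * m.choose (k+1) + (k+1) * m.choose k + (k+2) * m.choose (k+2)
      = (m+1) * (m+1).choose (k+1) := by
  rcases lt_or_ge k m with hk | hk
  · have hb := Nat.choose_succ_right_eq m k
    have hc := Nat.choose_succ_right_eq m (k+1)
    have hp := Nat.choose_succ_succ m k
    have hmk : ((m - k : ℕ) : ℤ) = (m:ℤ) - k := by omega
    have hmk1 : ((m - (k+1) : ℕ) : ℤ) = (m:ℤ) - k - 1 := by omega
    have hb' : (m.choose (k+1) : ℤ) * ((k:ℤ)+1) = (m.choose k : ℤ) * ((m:ℤ) - k) := by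
      have := congrArg (fun x : ℕ => (x:ℤ)) hb
      push_cast at this
      rw [hmk] at this
      linarith
    have hc' : (m.choose (k+2) : ℤ) * ((k:ℤ)+2) = (m.choose (k+1) : ℤ) * ((m:ℤ) - k - 1) := by
      have := congrArg (fun x : ℕ => (x:ℤ)) hc
      push_cast at this
      rw [hmk1] at this
      linarith
    have goalZ : ((2*k+3) * m.choose (k+1) + (k+1) * m.choose k + (k+2) * m.choose (k+2) : ℤ)
        = ((m:ℤ)+1) * ((m+1).choose (k+1) : ℤ) := by
      rw [show ((m+1).choose (k+1) : ℤ) = (m.choose k : ℤ) + (m.choose (k+1) : ℤ) by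
        exact_mod_cast congrArg (fun x : ℕ => (x:ℤ)) hp]
      linear_combination hb' + hc'
    exact_mod_cast goalZ
  · rcases eq_or_lt_of_le hk with rfl | hk2
    · simp [Nat.choose_self, Nat.choose_eq_zero_of_lt (show m < m+1 by omega),
        Nat.choose_eq_zero_of_lt (show m < m+2 by omega)]
    · have h1 : m.choose k = 0 := Nat.choose_eq_zero_of_lt hk2
      have h2 : m.choose (k+1) = 0 := Nat.choose_eq_zero_of_lt (by omega)
      have h3 : m.choose (k+2) = 0 := Nat.choose_eq_zero_of_lt (by omega)
      have h4 : (m+1).choose (k+1) = 0 := Nat.choose_eq_zero_of_lt (by omega)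
      simp [h1, h2, h3, h4]

lemma choose_cast (m r : ℕ) :
    ((r:ℤ)+1) * (m.choose (r+1) : ℤ) = (m.choose r : ℤ) * ((m:ℤ) - r) := by
  rcases lt_or_ge r m with h | h
  · have hb := Nat.choose_succ_right_eq m r
    have hmr : ((m - r : ℕ) : ℤ) = (m:ℤ) - r := by omega
    have := congrArg (fun x : ℕ => (x:ℤ)) hb
    push_cast at this
    rw [hmr] at this
    linarith
  · rcases eq_or_lt_of_le h with rfl | h2
    · simp [Nat.choose_eq_zero_of_lt (Nat.lt_succ_self m)]
    · simp [Nat.choose_eq_zero_of_lt h2, Nat.choose_eq_zero_of_lt (show m < r+1 by omega)]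

lemma Qc_closed : ∀ (m h : ℕ), Qc m (h : ℤ) = m.factorial * 2^m * m.choose h
  | 0, h => by
    rw [Qc_zero]
    cases h with
    | zero => simp
    | succ k =>
      rw [if_neg (show ¬(((k+1:ℕ)):ℤ) = 0 by omega)]
      simp
  | (m+1), h => by
    rw [Qc_succ]
    cases h with
    | zero =>
      have e1 : ((0:ℕ):ℤ) - 1 = -1 := by norm_num
      have e2 : (2*(((0:ℕ):ℤ)-1)+2).toNat = 0 := by norm_num
      have e3 : ((0:ℕ):ℤ) + 1 = ((1:ℕ):ℤ) := by norm_num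
      rw [e2, e3, Qc_closed m 0, Qc_closed m 1]
      simp [Nat.factorial_succ, Nat.choose_one_right]
      ring
    | succ k =>
      have e1 : (((k+1:ℕ)):ℤ) - 1 = ((k:ℕ):ℤ) := by push_cast; ring
      have e2 : (((k+1:ℕ)):ℤ) + 1 = ((k+2:ℕ):ℤ) := by push_cast; ring
      have e3 : (2*((((k+1:ℕ)):ℤ)-1)+2).toNat = 2*k+2 := by omega
      rw [e3, e1, e2, Qc_closed m (k+1), Qc_closed m k, Qc_closed m (k+2)]
      have hkey := key_id m k
      calc m.factorial * 2^m * m.choose (k+1) * (2*(k+1)+1)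
            + m.factorial * 2^m * m.choose (k+1) * (2*(k+1)+1)
            + m.factorial * 2^m * m.choose k * (2*k+2)
            + m.factorial * 2^m * m.choose (k+2) * (2*(k+1)+2)
          = m.factorial * 2^m * 2 * ((2*k+3) * m.choose (k+1) + (k+1) * m.choose k
              + (k+2) * m.choose (k+2)) := by ring
        _ = m.factorial * 2^m * 2 * ((m+1) * (m+1).choose (k+1)) := by rw [hkey]
        _ = (m+1).factorial * 2^(m+1) * (m+1).choose (k+1) := by
              rw [Nat.factorial_succ]; ring

/-- Closed forms: `pE(n,2r) = (n-1)!·2^n·C(n-1,r)·(2r+1)`,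
`pU(n,2r+1) = (n-1)!·2^n·C(n-1,r)·(r+1)`, and (in `ℤ`)
`pD(n,2r+1) = (n-1)!·2^n·C(n-1,r)·(n-r-1)`. -/
theorem pE_pU_pD_closed_form (n r : ℕ) (hn : 1 ≤ n) :
    pE n (2 * r) = (n - 1).factorial * 2 ^ n * (n - 1).choose r * (2 * r + 1) ∧
    pU n (2 * r + 1) = (n - 1).factorial * 2 ^ n * (n - 1).choose r * (r + 1) ∧
    (pD n (2 * r + 1) : ℤ)
      = (n - 1).factorial * 2 ^ n * (n - 1).choose r * ((n : ℤ) - r - 1) := by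
  obtain ⟨m, rfl⟩ : ∃ m, n = m + 1 := ⟨n - 1, by omega⟩
  have hfac : m + 1 - 1 = m := rfl
  have hU : pU (m+1) (2*(r:ℤ)+1) = (TSet m (2*(r:ℤ)+1) 0 0).ncard := rfl
  have hD : pD (m+1) (2*(r:ℤ)+1) = (TSet m (2*(r:ℤ)+1) 1 1).ncard := rfl
  have hEset : {t : (ℕ → ℕ) × (ℕ → ℕ) × (ℕ → ℕ) | IsBDatum (m+1) t.1 t.2.1 t.2.2 ∧
      bHeight t.2.1 t.2.2 (m+1-1) + bHeight t.2.1 t.2.2 (m+1) = 2*(r:ℤ) ∧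
      t.2.1 (m+1) + t.2.2 (m+1) = 1}
      = TSet m (2*(r:ℤ)) 1 0 ∪ TSet m (2*(r:ℤ)) 0 1 := by
    ext ⟨α, β, γ⟩
    simp only [Set.mem_setOf_eq, TSet, Set.mem_union]
    constructor
    · rintro ⟨hd, hr2, hbc⟩
      obtain ⟨hb1, hc1⟩ := hd.2.1 (m+1) (Finset.mem_Icc.mpr ⟨by omega, le_rfl⟩)
      have hcase : (β (m+1) = 1 ∧ γ (m+1) = 0) ∨ (β (m+1) = 0 ∧ γ (m+1) = 1) := by omega
      rcases hcase with ⟨h1, h2⟩ | ⟨h1, h2⟩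
      · exact Or.inl ⟨hd, hr2, h1, h2⟩
      · exact Or.inr ⟨hd, hr2, h1, h2⟩
    · rintro (⟨hd, hr2, h1, h2⟩ | ⟨hd, hr2, h1, h2⟩) <;> exact ⟨hd, hr2, by omega⟩
  have hE : pE (m+1) (2*(r:ℤ)) = (TSet m (2*(r:ℤ)) 1 0 ∪ TSet m (2*(r:ℤ)) 0 1).ncard :=
    congrArg Set.ncard hEset
  have f1 := finite_TSet m (show (1:ℕ) ≤ 1 by omega) (show (0:ℕ) ≤ 1 by omega) (r:ℤ)
    (2*(r:ℤ)) (by push_cast; ring) (finite_QSet m r)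
  have f2 := finite_TSet m (show (0:ℕ) ≤ 1 by omega) (show (1:ℕ) ≤ 1 by omega) (r:ℤ)
    (2*(r:ℤ)) (by push_cast; ring) (finite_QSet m r)
  have cE1 : (TSet m (2*(r:ℤ)) 1 0).ncard = Qc m r * (2*r+1) := by
    rw [ncard_TSet m (by omega) (by omega) (r:ℤ) _ (by push_cast; ring)]
    congr 1
  have cE2 : (TSet m (2*(r:ℤ)) 0 1).ncard = Qc m r * (2*r+1) := by
    rw [ncard_TSet m (by omega) (by omega) (r:ℤ) _ (by push_cast; ring)]
    congr 1
  have cU : (TSet m (2*(r:ℤ)+1) 0 0).ncard = Qc m r * (2*r+2) := by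
    rw [ncard_TSet m (by omega) (by omega) (r:ℤ) _ (by push_cast; ring)]
    congr 1
  have cD : (TSet m (2*(r:ℤ)+1) 1 1).ncard = Qc m ((r:ℤ)+1) * (2*r+2) := by
    rw [ncard_TSet m (by omega) (by omega) ((r:ℤ)+1) _ (by push_cast; ring)]
    congr 1
  have qr := Qc_closed m r
  have er1 : (r:ℤ) + 1 = ((r+1:ℕ) : ℤ) := by push_cast; ring
  refine ⟨?_, ?_, ?_⟩
  · rw [hfac]
    push_cast
    rw [hE, Set.ncard_union_eq (disj_TSet (Or.inl (by omega))) f1 f2, cE1, cE2, qr]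
    ring
  · rw [hfac]
    push_cast
    rw [hU, cU, qr]
    ring
  · rw [hfac]
    push_cast
    rw [hD, cD, er1, Qc_closed m (r+1)]
    push_cast
    linear_combination ((m.factorial : ℤ) * 2^m * 2) * choose_cast m r
end
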